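/- For real α > 0 define υ(α) := 2^{α+1}/(2^{α+1} − 2) and the digitally-shift-invariant kernel K⃛_α on [0,1) × [0,1) by K⃛_α(x, y) := υ(α) if x = y, and K⃛_α(x, y) := υ(α) − 2^{−α(β(x ⊕ y) − 1)} (υ(α) + 1) if x ≠ y. Then for every dyadic rational x ∈ [0,1): (i) if 0 < α < 2, then (K⃛_α(x, x) − K⃛_α(x + h, x))/h² → +∞ as h → 0⁺; (ii) if α > 2, then (K⃛_α(x, x) − K⃛_α(x + h, x))/h² → 0 as h → 0⁺; (iii) if α = 2, the limit of (K⃛_α(x, x) − K⃛_α(x + h, x))/h² as h → 0⁺ does not exist—along the sequence h_p = 2^{−p} the quotient converges to a limit different from its limit along the sequence h_p = 3 · 2^{−p−1}. -/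

import Mathlib

noncomputable def binDigit (ℓ : ℕ) (x : ℝ) : ℕ := (⌊(2 : ℝ) ^ ℓ * x⌋).toNat % 2

noncomputable def xorBin (x y : ℝ) : ℝ :=
  ∑' ℓ : ℕ,
    (((binDigit (ℓ + 1) x + binDigit (ℓ + 1) y) % 2 : ℕ) : ℝ) * (2 : ℝ) ^ (-((ℓ : ℤ) + 1))

noncomputable def betaFn (x : ℝ) : ℤ := if x = 0 then 0 else -⌊Real.logb 2 x⌋

noncomputable def upsilon (α : ℝ) : ℝ := (2 : ℝ) ^ (α + 1) / ((2 : ℝ) ^ (α + 1) - 2)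

noncomputable def Kthree (α : ℝ) (x y : ℝ) : ℝ :=
  if x = y then upsilon α
  else upsilon α - (2 : ℝ) ^ (-α * ((betaFn (xorBin x y) : ℝ) - 1)) * (upsilon α + 1)


/-!
For a dyadic `x = j / 2 ^ m` and `0 < h < 2⁻ᵐ`, adding `h` to `x` produces no binary carry, so
`(x + h) ⊕ x = h` and `K⃛_α(x, x) - K⃛_α(x + h, x) = (υ(α) + 1) 2^{-α(β(h) - 1)}`.
Since `2^{-β(h)} ≤ h < 2^{1-β(h)}`, this lies between `(υ(α) + 1) h^α` and `2^α (υ(α) + 1) h^α`,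
so the difference quotient is of exact order `h^{α-2}`. For `α = 2` it equals
`4 (υ(2) + 1) (2^{-β(h)} / h)²`, which is `4 (υ(2) + 1)` along `h = 2⁻ᵖ` but
`16 (υ(2) + 1) / 9` along `h = 3 · 2^{-p-1}`.
-/

open Filter Topology Set

lemma binDigit_eq (n : ℕ) (x : ℝ) : binDigit n x = ⌊(2 : ℝ) ^ n * x⌋₊ % 2 := by
  rw [binDigit, Int.floor_toNat]

lemma floor_two_pow_succ_mul (n : ℕ) (x : ℝ) :
    ⌊(2 : ℝ) ^ (n + 1) * x⌋₊ = 2 * ⌊(2 : ℝ) ^ n * x⌋₊ + binDigit (n + 1) x := by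
  have hdiv : ⌊(2 : ℝ) ^ (n + 1) * x⌋₊ / 2 = ⌊(2 : ℝ) ^ n * x⌋₊ := by
    rw [← Nat.floor_div_natCast, pow_succ]
    congr 1
    push_cast
    ring
  rw [binDigit_eq]
  omega

lemma sum_range_binDigit (x : ℝ) (n : ℕ) :
    ∑ ℓ ∈ Finset.range n, (binDigit (ℓ + 1) x : ℝ) * (2 : ℝ) ^ (-((ℓ : ℤ) + 1)) =
      ⌊(2 : ℝ) ^ n * x⌋₊ / 2 ^ n - ⌊x⌋₊ := by
  induction n with
  | zero => simp
  | succ n ih =>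
    rw [Finset.sum_range_succ, ih, floor_two_pow_succ_mul, zpow_neg, ← Nat.cast_succ,
      zpow_natCast, Nat.succ_eq_add_one]
    push_cast
    field_simp
    ring

lemma hasSum_binDigit {x : ℝ} (hx : 0 ≤ x) :
    HasSum (fun ℓ : ℕ => (binDigit (ℓ + 1) x : ℝ) * (2 : ℝ) ^ (-((ℓ : ℤ) + 1))) (x - ⌊x⌋₊) := by
  rw [hasSum_iff_tendsto_nat_of_nonneg (fun ℓ => by positivity)]
  simp_rw [sum_range_binDigit]
  refine (((tendsto_nat_floor_mul_div_atTop hx).comp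
    (tendsto_pow_atTop_atTop_of_one_lt one_lt_two)).sub_const _).congr fun n => ?_
  simp [mul_comm]

/-- Adding `h < 2⁻ᵐ` to a dyadic rational of level `m` produces no carry. -/
lemma floor_two_pow_mul_dyadic_add {j m : ℕ} {h : ℝ} (h0 : 0 ≤ h) (hm : 2 ^ m * h < 1)
    (n : ℕ) :
    ⌊(2 : ℝ) ^ n * (j / 2 ^ m + h)⌋₊ = ⌊(2 : ℝ) ^ n * (j / 2 ^ m)⌋₊ + ⌊(2 : ℝ) ^ n * h⌋₊ := by
  rcases le_total n m with hnm | hmn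
  · obtain ⟨k, rfl⟩ := Nat.exists_eq_add_of_le hnm
    have e : ∀ s : ℝ, (2 : ℝ) ^ n * s = 2 ^ (n + k) * s / (2 ^ k : ℕ) := fun s => by
      push_cast; rw [pow_add]; field_simp
    rw [e, e (j / _), e h, mul_add, mul_div_cancel₀ _ (by positivity), Nat.floor_div_natCast,
      Nat.floor_div_natCast, Nat.floor_div_natCast, add_comm, Nat.floor_add_natCast (by positivity),
      Nat.floor_natCast, Nat.floor_eq_zero.2 hm]
    simp
  · obtain ⟨k, rfl⟩ := Nat.exists_eq_add_of_le hmn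
    have e : (2 : ℝ) ^ (m + k) * (j / 2 ^ m) = (j * 2 ^ k : ℕ) := by
      push_cast; rw [pow_add]; field_simp
    rw [mul_add, e, Nat.floor_natCast, add_comm, Nat.floor_add_natCast (by positivity), add_comm]

lemma binDigit_xor_dyadic_add {j m : ℕ} {h : ℝ} (h0 : 0 ≤ h) (hm : 2 ^ m * h < 1)
    (n : ℕ) : (binDigit n (j / 2 ^ m + h) + binDigit n (j / 2 ^ m)) % 2 = binDigit n h := by
  simp only [binDigit_eq, floor_two_pow_mul_dyadic_add h0 hm n]
  omega

lemma xorBin_dyadic_add_self {j m : ℕ} {h : ℝ} (h0 : 0 ≤ h) (hm : 2 ^ m * h < 1) :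
    xorBin (j / 2 ^ m + h) (j / 2 ^ m) = h := by
  have h1 : h < 1 := lt_of_le_of_lt (le_mul_of_one_le_left h0 (one_le_pow₀ one_le_two)) hm
  simp only [xorBin, binDigit_xor_dyadic_add h0 hm]
  simpa [Nat.floor_eq_zero.2 h1] using (hasSum_binDigit h0).tsum_eq

lemma betaFn_eq_neg_log {x : ℝ} (hx : 0 < x) : betaFn x = -Int.log 2 x := by
  rw [betaFn, if_neg hx.ne', ← Nat.cast_ofNat, Real.floor_logb_natCast hx.le]

lemma two_zpow_neg_betaFn_le {x : ℝ} (hx : 0 < x) : (2 : ℝ) ^ (-betaFn x) ≤ x := by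
  rw [betaFn_eq_neg_log hx, neg_neg]
  exact_mod_cast Int.zpow_log_le_self one_lt_two hx

lemma lt_two_zpow_one_sub_betaFn {x : ℝ} (hx : 0 < x) : x < (2 : ℝ) ^ (1 - betaFn x) := by
  rw [betaFn_eq_neg_log hx, sub_neg_eq_add, add_comm]
  exact_mod_cast Int.lt_zpow_succ_log_self one_lt_two x

lemma betaFn_eq_of_mem_Ico {x : ℝ} {k : ℤ} (hx : x ∈ Ico ((2 : ℝ) ^ (-k)) (2 ^ (1 - k))) :
    betaFn x = k := by
  have hx0 : 0 < x := lt_of_lt_of_le (by positivity) hx.1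
  have hle := (Int.zpow_le_iff_le_log one_lt_two hx0).1 (by exact_mod_cast hx.1)
  have hlt := (Int.lt_zpow_iff_log_lt one_lt_two hx0).1 (by exact_mod_cast hx.2)
  rw [betaFn_eq_neg_log hx0]
  omega

lemma two_rpow_betaFn_eq (α : ℝ) (x : ℝ) :
    (2 : ℝ) ^ (-α * ((betaFn x : ℝ) - 1)) = ((2 : ℝ) ^ (1 - betaFn x)) ^ α := by
  rw [← Real.rpow_intCast, ← Real.rpow_mul zero_le_two]
  push_cast
  ring_nf

lemma rpow_le_two_rpow_betaFn {α x : ℝ} (hα : 0 ≤ α) (hx : 0 < x) :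
    x ^ α ≤ (2 : ℝ) ^ (-α * ((betaFn x : ℝ) - 1)) := by
  rw [two_rpow_betaFn_eq]
  exact Real.rpow_le_rpow hx.le (lt_two_zpow_one_sub_betaFn hx).le hα

lemma two_rpow_betaFn_le {α x : ℝ} (hα : 0 ≤ α) (hx : 0 < x) :
    (2 : ℝ) ^ (-α * ((betaFn x : ℝ) - 1)) ≤ 2 ^ α * x ^ α := by
  rw [two_rpow_betaFn_eq, zpow_sub₀ two_ne_zero, zpow_one, div_eq_mul_inv, ← zpow_neg,
    Real.mul_rpow zero_le_two (by positivity)]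
  gcongr
  exact two_zpow_neg_betaFn_le hx

lemma upsilon_add_one_pos {α : ℝ} (hα : 0 < α) : 0 < upsilon α + 1 := by
  have h2 : 2 < (2 : ℝ) ^ (α + 1) := by
    simpa using Real.rpow_lt_rpow_of_exponent_lt one_lt_two (by linarith : (1 : ℝ) < α + 1)
  have : 0 < upsilon α := div_pos (by positivity) (by linarith)
  linarith

lemma Kthree_self_sub_dyadic_add (α : ℝ) {j m : ℕ} {h : ℝ} (h0 : 0 < h) (hm : 2 ^ m * h < 1) :
    Kthree α (j / 2 ^ m) (j / 2 ^ m) - Kthree α (j / 2 ^ m + h) (j / 2 ^ m) =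
      (upsilon α + 1) * 2 ^ (-α * ((betaFn h : ℝ) - 1)) := by
  rw [Kthree, Kthree, if_pos rfl, if_neg (by simpa using h0.ne'),
    xorBin_dyadic_add_self h0.le hm]
  ring

lemma Kthree_diffQuotient_eventuallyEq (α : ℝ) (j m : ℕ) :
    (fun h : ℝ => (Kthree α (j / 2 ^ m) (j / 2 ^ m) - Kthree α (j / 2 ^ m + h) (j / 2 ^ m)) / h ^ 2)
      =ᶠ[𝓝[>] 0] fun h => (upsilon α + 1) * 2 ^ (-α * ((betaFn h : ℝ) - 1)) / h ^ 2 := by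
  have hsmall : ∀ᶠ h : ℝ in 𝓝 0, 2 ^ m * h < 1 :=
    (continuous_const_mul _).tendsto' 0 0 (mul_zero _) |>.eventually (gt_mem_nhds one_pos)
  filter_upwards [self_mem_nhdsWithin, nhdsWithin_le_nhds hsmall] with h h0 hm
  rw [Kthree_self_sub_dyadic_add α h0 hm]

lemma rpow_sub_two_le_two_rpow_betaFn_div_sq {α x : ℝ} (hα : 0 ≤ α) (hx : 0 < x) :
    x ^ (α - 2) ≤ (2 : ℝ) ^ (-α * ((betaFn x : ℝ) - 1)) / x ^ 2 := by
  rw [Real.rpow_sub hx, Real.rpow_two]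
  gcongr
  exact rpow_le_two_rpow_betaFn hα hx

lemma two_rpow_betaFn_div_sq_le {α x : ℝ} (hα : 0 ≤ α) (hx : 0 < x) :
    (2 : ℝ) ^ (-α * ((betaFn x : ℝ) - 1)) / x ^ 2 ≤ 2 ^ α * x ^ (α - 2) := by
  rw [Real.rpow_sub hx, Real.rpow_two, mul_div_assoc']
  gcongr
  exact two_rpow_betaFn_le hα hx

lemma tendsto_const_mul_two_zpow_neg_nhdsGT {c : ℝ} (hc : 0 < c) :
    Tendsto (fun p : ℕ => c * (2 : ℝ) ^ (-(p : ℤ))) atTop (𝓝[>] 0) := by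
  refine tendsto_nhdsWithin_iff.2 ⟨?_, Eventually.of_forall fun p => mem_Ioi.2 (by positivity)⟩
  simpa using ((tendsto_inv_atTop_zero.comp
    (tendsto_pow_atTop_atTop_of_one_lt one_lt_two)).const_mul c)

lemma tendsto_Kthree_two_diffQuotient (j m : ℕ) {c : ℝ} (hc : c ∈ Ico (1 : ℝ) 2) :
    Tendsto (fun p : ℕ => (Kthree 2 (j / 2 ^ m) (j / 2 ^ m) -
        Kthree 2 (j / 2 ^ m + c * 2 ^ (-(p : ℤ))) (j / 2 ^ m)) / (c * 2 ^ (-(p : ℤ))) ^ 2)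
      atTop (𝓝 (4 * (upsilon 2 + 1) / c ^ 2)) := by
  have hc0 : 0 < c := one_pos.trans_le hc.1
  refine tendsto_const_nhds.congr' (EventuallyEq.symm ?_)
  refine ((Kthree_diffQuotient_eventuallyEq 2 j m).comp_tendsto
    (tendsto_const_mul_two_zpow_neg_nhdsGT hc0)).trans (Eventually.of_forall fun p => ?_)
  have hβ : betaFn (c * 2 ^ (-(p : ℤ))) = p := by
    refine betaFn_eq_of_mem_Ico ⟨le_mul_of_one_le_left (by positivity) hc.1, ?_⟩
    rw [zpow_sub₀ two_ne_zero, zpow_one, div_eq_mul_inv, ← zpow_neg]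
    exact mul_lt_mul_of_pos_right hc.2 (by positivity)
  simp only [Function.comp_apply]
  rw [two_rpow_betaFn_eq, hβ, Real.rpow_two, zpow_sub₀ two_ne_zero, zpow_one, zpow_neg]
  field_simp
  norm_num

theorem stmt_15_general (α : ℝ) (hα : 0 < α) (x : ℝ)
    (hdy : ∃ j mm : ℕ, x = (j : ℝ) / 2 ^ mm) :
    (α < 2 →
      Filter.Tendsto (fun h : ℝ => (Kthree α x x - Kthree α (x + h) x) / h ^ 2)
        (nhdsWithin 0 (Set.Ioi 0)) Filter.atTop) ∧
    (2 < α →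
      Filter.Tendsto (fun h : ℝ => (Kthree α x x - Kthree α (x + h) x) / h ^ 2)
        (nhdsWithin 0 (Set.Ioi 0)) (nhds 0)) ∧
    (α = 2 →
      ∃ L₁ L₂ : ℝ, L₁ ≠ L₂ ∧
        Filter.Tendsto
          (fun p : ℕ =>
            (Kthree α x x - Kthree α (x + (2 : ℝ) ^ (-(p : ℤ))) x) /
              ((2 : ℝ) ^ (-(p : ℤ))) ^ 2)
          Filter.atTop (nhds L₁) ∧
        Filter.Tendsto
          (fun p : ℕ =>
            (Kthree α x x - Kthree α (x + 3 * (2 : ℝ) ^ (-(p : ℤ) - 1)) x) /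
              (3 * (2 : ℝ) ^ (-(p : ℤ) - 1)) ^ 2)
          Filter.atTop (nhds L₂)) := by
  obtain ⟨j, m, rfl⟩ := hdy
  have hC := upsilon_add_one_pos hα
  have hq := Kthree_diffQuotient_eventuallyEq α j m
  refine ⟨fun hα2 => ?_, fun hα2 => ?_, fun hα2 => ?_⟩
  · refine (tendsto_atTop_mono' _ ?_
      ((tendsto_rpow_neg_nhdsGT_zero (by linarith : α - 2 < 0)).const_mul_atTop hC)).congr' hq.symm
    filter_upwards [self_mem_nhdsWithin] with h h0
    rw [mul_div_assoc]
    gcongr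
    exact rpow_sub_two_le_two_rpow_betaFn_div_sq hα.le h0
  · have hlim : Tendsto (fun h : ℝ => (upsilon α + 1) * (2 ^ α * h ^ (α - 2))) (𝓝[>] 0) (𝓝 0) := by
      have hpow := (Real.continuous_rpow_const (by linarith : (0 : ℝ) ≤ α - 2)).tendsto' 0 0
        (Real.zero_rpow (by linarith))
      simpa using ((hpow.mono_left nhdsWithin_le_nhds).const_mul (2 ^ α)).const_mul (upsilon α + 1)
    refine (squeeze_zero' ?_ ?_ hlim).congr' hq.symm
    · filter_upwards [self_mem_nhdsWithin] with h h0
      positivity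
    · filter_upwards [self_mem_nhdsWithin] with h h0
      rw [mul_div_assoc]
      gcongr
      exact two_rpow_betaFn_div_sq_le hα.le h0
  · subst hα2
    refine ⟨4 * (upsilon 2 + 1) / 1 ^ 2, 4 * (upsilon 2 + 1) / (3 / 2) ^ 2, ?_,
      by simpa using tendsto_Kthree_two_diffQuotient j m (c := 1) ⟨le_rfl, one_lt_two⟩, ?_⟩
    · exact (div_lt_div_of_pos_left (by positivity) (by norm_num) (by norm_num)).ne'
    · have e : ∀ p : ℕ, (3 : ℝ) * 2 ^ (-(p : ℤ) - 1) = 3 / 2 * 2 ^ (-(p : ℤ)) := fun p => by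
        rw [zpow_sub₀ two_ne_zero]; ring
      simpa only [e] using tendsto_Kthree_two_diffQuotient j m (c := 3 / 2) ⟨by norm_num, by norm_num⟩

theorem stmt_15 (α : ℝ) (hα : 0 < α) (x : ℝ) (hx : x ∈ Set.Ico (0 : ℝ) 1)
    (hdy : ∃ j mm : ℕ, x = (j : ℝ) / 2 ^ mm) :
    (α < 2 →
      Filter.Tendsto (fun h : ℝ => (Kthree α x x - Kthree α (x + h) x) / h ^ 2)
        (nhdsWithin 0 (Set.Ioi 0)) Filter.atTop) ∧
    (2 < α →
      Filter.Tendsto (fun h : ℝ => (Kthree α x x - Kthree α (x + h) x) / h ^ 2)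
        (nhdsWithin 0 (Set.Ioi 0)) (nhds 0)) ∧
    (α = 2 →
      ∃ L₁ L₂ : ℝ, L₁ ≠ L₂ ∧
        Filter.Tendsto
          (fun p : ℕ =>
            (Kthree α x x - Kthree α (x + (2 : ℝ) ^ (-(p : ℤ))) x) /
              ((2 : ℝ) ^ (-(p : ℤ))) ^ 2)
          Filter.atTop (nhds L₁) ∧
        Filter.Tendsto
          (fun p : ℕ =>
            (Kthree α x x - Kthree α (x + 3 * (2 : ℝ) ^ (-(p : ℤ) - 1)) x) /
              (3 * (2 : ℝ) ^ (-(p : ℤ) - 1)) ^ 2)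
          Filter.atTop (nhds L₂)) :=
  stmt_15_general α hα x hdy
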